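/- Let k be odd, S = ℤ/2kℤ, G = Aff(ℤ/2kℤ), and μ the Möbius function of the subgroup lattice of G. Then Q_rig(-1) = (1/|G|) ∑_{H ≤ G, H ⊄ K₀} μ(1,H) · 2^{|S/H|}, where K₀ is the even-translation subgroup and |S/H| is the number of H-orbits. -/

import Mathlib

attribute [local instance] Classical.propDecidable


open Pointwise

def affPerm (n : ℕ) (u : ZMod n) (v : (ZMod n)ˣ) : Equiv.Perm (ZMod n) where
  toFun x := v * x + u
  invFun x := (v⁻¹ : (ZMod n)ˣ) * (x - u)
  left_inv x := by simp
  right_inv x := by simp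

def Aff (n : ℕ) : Subgroup (Equiv.Perm (ZMod n)) where
  carrier := {σ | ∃ u v, σ = affPerm n u v}
  one_mem' := ⟨0, 1, Equiv.ext fun x => by simp [affPerm]⟩
  mul_mem' := by
    rintro σ τ ⟨u1, v1, rfl⟩ ⟨u2, v2, rfl⟩
    exact ⟨v1 * u2 + u1, v1 * v2, Equiv.ext fun x => by
      simp [affPerm, Equiv.Perm.mul_apply, mul_add, mul_assoc, add_assoc]⟩
  inv_mem' := by
    rintro σ ⟨u, v, rfl⟩
    refine ⟨-(↑v⁻¹ * u), v⁻¹, Equiv.ext fun x => ?_⟩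
    simp [affPerm, Equiv.Perm.inv_def, Equiv.symm, mul_sub, sub_eq_add_neg, mul_add, mul_neg]

def AffK0 (n : ℕ) : Subgroup (Equiv.Perm (ZMod n)) where
  carrier := {σ | ∃ u v, Even u ∧ σ = affPerm n u v}
  one_mem' := ⟨0, 1, ⟨0, (add_zero _).symm⟩, Equiv.ext fun x => by simp [affPerm]⟩
  mul_mem' := by
    rintro σ τ ⟨u1, v1, hu1, rfl⟩ ⟨u2, v2, hu2, rfl⟩
    exact ⟨v1 * u2 + u1, v1 * v2, (hu2.mul_left _).add hu1, Equiv.ext fun x => by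
      simp [affPerm, Equiv.Perm.mul_apply, mul_add, mul_assoc, add_assoc]⟩
  inv_mem' := by
    rintro σ ⟨u, v, hu, rfl⟩
    refine ⟨-(↑v⁻¹ * u), v⁻¹, (hu.mul_left _).neg, Equiv.ext fun x => ?_⟩
    simp [affPerm, Equiv.Perm.inv_def, Equiv.symm, mul_sub, sub_eq_add_neg, mul_add, mul_neg]

/-!
Möbius inversion on the subgroup lattice writes the indicator of `G_A = 1` as
`∑_{H ≤ G_A} μ(1,H)`; exchanging the sums, each `H` contributes `μ(1,H)` times the signed count
of `H`-invariant subsets, which is `∏_{O ∈ S/H} (1 + (-1)^{|O|})` since such subsets are unions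
of orbits. If `H ⊄ K₀`, it contains an affine map with odd translation; this map swaps the two
parity classes of `ℤ/2kℤ` and preserves every `H`-orbit, so all orbits have even size and the
product is `2^{|S/H|}`. If `H ≤ K₀`, then `H` preserves the set of the `k` even residues, and as
`k` is odd, one of the orbits inside it has odd size, so the product vanishes.
-/

open Finset MulAction

theorem sum_filter_le_eq_ite_bot {α : Type*} [PartialOrder α] [OrderBot α] [Fintype α]
    (μ : α → ℤ) (hμ1 : μ ⊥ = 1)
    (hrec : ∀ a, a ≠ ⊥ → μ a = -∑ b ∈ univ.filter (· < a), μ b) (a : α) :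
    ∑ b ∈ univ.filter (· ≤ a), μ b = if a = ⊥ then 1 else 0 := by
  split_ifs with ha
  · rw [ha, sum_filter]
    simp [hμ1]
  · have hfilter : univ.filter (· ≤ a) = insert a (univ.filter (· < a)) := by
      ext b; simp [le_iff_lt_or_eq, or_comm]
    rw [hfilter, sum_insert (by simp), hrec a ha, neg_add_cancel]

theorem card_eq_two_mul_card_filter_of_mapsTo {S : Type*} {F : Finset S} {σ : S → S}
    (hσ : Set.MapsTo σ F F) (hinj : σ.Injective) (p : S → Prop) [DecidablePred p]
    (hp : ∀ x, p (σ x) ↔ ¬ p x) : #F = 2 * #(F.filter p) := by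
  have hle : #(F.filter p) ≤ #{x ∈ F | ¬ p x} :=
    card_le_card_of_injOn σ (fun x hx => by
      simp only [coe_filter, Set.mem_ofPred_eq] at hx ⊢
      exact ⟨hσ hx.1, (hp x).not.2 (not_not.2 hx.2)⟩) hinj.injOn
  have hge : #{x ∈ F | ¬ p x} ≤ #(F.filter p) :=
    card_le_card_of_injOn σ (fun x hx => by
      simp only [coe_filter, Set.mem_ofPred_eq] at hx ⊢
      exact ⟨hσ hx.1, (hp x).2 hx.2⟩) hinj.injOn
  have := card_filter_add_card_filter_not (s := F) p
  omega

theorem le_stabilizer_finset_iff {G α : Type*} [Group G] [MulAction G α] [DecidableEq α]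
    (H : Subgroup G) (A : Finset α) : H ≤ stabilizer G A ↔ ∀ g : H, g • A = A := by
  simp only [SetLike.le_def, mem_stabilizer_iff, Subtype.forall, smul_finset_def]
  rfl

section InvariantFinsets

variable {G S : Type*} [Group G] [MulAction G S] [Fintype S]

noncomputable def orbitUnion (T : Finset (orbitRel.Quotient G S)) : Finset S :=
  univ.filter fun s => ⟦s⟧ ∈ T

@[simp]
theorem mem_orbitUnion {T : Finset (orbitRel.Quotient G S)} {s : S} :
    s ∈ orbitUnion T ↔ ⟦s⟧ ∈ T := by
  simp [orbitUnion]

theorem ncard_orbit_eq_card_filter (q : orbitRel.Quotient G S) :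
    q.orbit.ncard = #{s | (⟦s⟧ : orbitRel.Quotient G S) = q} := by
  rw [← Set.ncard_coe_finset]
  congr
  ext s
  simp [orbitRel.Quotient.mem_orbit]

theorem card_orbitUnion (T : Finset (orbitRel.Quotient G S)) :
    #(orbitUnion T) = ∑ q ∈ T, q.orbit.ncard := by
  rw [card_eq_sum_card_fiberwise (f := (⟦·⟧)) (t := T) fun s hs => mem_orbitUnion.1 hs]
  refine sum_congr rfl fun q hq => ?_
  rw [ncard_orbit_eq_card_filter]
  congr 1
  ext s
  simp only [mem_filter, mem_orbitUnion, mem_univ, true_and, and_iff_right_iff_imp]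
  exact fun h => h ▸ hq

theorem even_ncard_orbit_of_forall_iff_not (g : G) (p : S → Prop) (hp : ∀ s, p (g • s) ↔ ¬ p s)
    (q : orbitRel.Quotient G S) : Even q.orbit.ncard := by
  rw [ncard_orbit_eq_card_filter,
    card_eq_two_mul_card_filter_of_mapsTo (σ := (g • ·)) ?_ (MulAction.injective g) p hp]
  · exact even_two_mul _
  · intro s hs
    simp_all [orbitRel.Quotient.quotient_smul_eq]

variable [DecidableEq S]

theorem eq_orbitUnion_image {A : Finset S} (hA : ∀ g : G, g • A = A) :
    A = orbitUnion (A.image (⟦·⟧ : S → orbitRel.Quotient G S)) := by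
  ext s
  simp only [mem_orbitUnion, mem_image]
  refine ⟨fun hs => ⟨s, hs, rfl⟩, fun ⟨t, ht, hts⟩ => ?_⟩
  obtain ⟨g, rfl⟩ : ∃ g : G, g • t = s := Quotient.exact hts.symm
  rw [← hA g]
  exact smul_mem_smul_finset ht

theorem smul_orbitUnion (T : Finset (orbitRel.Quotient G S)) (g : G) :
    g • (orbitUnion T : Finset S) = orbitUnion T := by
  ext s
  simp only [mem_smul_finset, mem_orbitUnion]
  exact ⟨fun ⟨t, ht, hts⟩ => by rwa [← hts, orbitRel.Quotient.quotient_smul_eq],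
    fun hs => ⟨g⁻¹ • s, by rwa [orbitRel.Quotient.quotient_smul_eq], smul_inv_smul g s⟩⟩

theorem sum_pow_card_smul_eq_self [Fintype (orbitRel.Quotient G S)] {R : Type*} [CommSemiring R]
    (x : R) :
    ∑ A : Finset S with ∀ g : G, g • A = A, x ^ #A =
      ∏ q : orbitRel.Quotient G S, (1 + x ^ q.orbit.ncard) := by
  have himage :
      ({A | ∀ g : G, g • A = A} : Finset (Finset S)) = univ.image (orbitUnion (G := G)) := by
    ext A
    simp only [mem_filter, mem_univ, true_and, mem_image]
    exact ⟨fun hA => ⟨_, (eq_orbitUnion_image hA).symm⟩,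
      fun ⟨T, hT⟩ g => hT ▸ smul_orbitUnion T g⟩
  have hinj : Function.Injective (orbitUnion : Finset (orbitRel.Quotient G S) → Finset S) := by
    intro T T' h
    ext q
    obtain ⟨s, rfl⟩ := Quotient.exists_rep q
    simpa using congrArg (s ∈ ·) h
  rw [himage, sum_image fun T _ T' _ h => hinj h, prod_one_add, powerset_univ]
  exact sum_congr rfl fun T _ => by rw [card_orbitUnion, prod_pow_eq_pow_sum]

theorem exists_odd_ncard_orbit {E : Finset S} (hE : ∀ g : G, g • E = E) (hodd : Odd #E) :
    ∃ q : orbitRel.Quotient G S, Odd q.orbit.ncard := by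
  rw [eq_orbitUnion_image hE, card_orbitUnion, odd_sum_iff_odd_card_odd] at hodd
  obtain ⟨q, hq⟩ := card_pos.1 hodd.pos
  exact ⟨q, (mem_filter.1 hq).2⟩

end InvariantFinsets

section Parity

variable {n : ℕ}

theorem ZMod.even_iff_castHom_eq_zero (hn : 2 ∣ n) (u : ZMod n) :
    Even u ↔ ZMod.castHom hn (ZMod 2) u = 0 := by
  refine ⟨fun ⟨r, hr⟩ => by rw [hr, map_add, CharTwo.add_self_eq_zero], fun h => ?_⟩
  rw [← ZMod.intCast_zmod_cast u] at h ⊢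
  rw [ZMod.castHom_apply, ZMod.cast_intCast hn, ZMod.intCast_eq_zero_iff_even] at h
  exact h.intCast

theorem ZMod.castHom_units_eq_one (hn : 2 ∣ n) (v : (ZMod n)ˣ) : ZMod.castHom hn (ZMod 2) v = 1 :=
  congrArg Units.val (Subsingleton.elim (Units.map (ZMod.castHom hn (ZMod 2)).toMonoidHom v) 1)

theorem even_affPerm_iff (hn : 2 ∣ n) (u : ZMod n) (v : (ZMod n)ˣ) (x : ZMod n) :
    Even (affPerm n u v x) ↔ (Even x ↔ Even u) := by
  simp only [ZMod.even_iff_castHom_eq_zero hn]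
  change ZMod.castHom hn (ZMod 2) (v * x + u) = 0 ↔ _
  rw [map_add, map_mul, ZMod.castHom_units_eq_one, one_mul]
  generalize ZMod.castHom hn (ZMod 2) x = a
  generalize ZMod.castHom hn (ZMod 2) u = b
  revert a b
  decide

theorem ZMod.even_add_one_iff (hn : 2 ∣ n) (x : ZMod n) : Even (x + 1) ↔ ¬ Even x := by
  simp only [ZMod.even_iff_castHom_eq_zero hn, map_add, map_one]
  generalize ZMod.castHom hn (ZMod 2) x = a
  revert a
  decide

theorem even_smul_iff_of_le_affK0 (hn : 2 ∣ n) {H : Subgroup (Aff n)} (hH : H ≤ (AffK0 n).subgroupOf (Aff n))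
    (g : H) (x : ZMod n) : Even (g • x) ↔ Even x := by
  obtain ⟨u, v, hu, hg⟩ := Subgroup.mem_subgroupOf.1 (hH g.2)
  change Even (((g : Aff n) : Equiv.Perm (ZMod n)) x) ↔ _
  rw [hg, even_affPerm_iff hn]
  tauto

theorem exists_even_smul_iff_not_of_not_le_affK0 (hn : 2 ∣ n) {H : Subgroup (Aff n)}
    (hH : ¬ H ≤ (AffK0 n).subgroupOf (Aff n)) : ∃ g : H, ∀ x : ZMod n, Even (g • x) ↔ ¬ Even x := by
  obtain ⟨g, hgH, hgK⟩ := SetLike.not_le_iff_exists.1 hH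
  obtain ⟨u, v, hg⟩ := g.2
  have hu : ¬ Even u := fun hu => hgK (Subgroup.mem_subgroupOf.2 ⟨u, v, hu, hg⟩)
  refine ⟨⟨g, hgH⟩, fun x => ?_⟩
  change Even ((g : Equiv.Perm (ZMod n)) x) ↔ _
  rw [hg, even_affPerm_iff hn]
  tauto

end Parity

theorem ZMod.card_filter_even (k : ℕ) [NeZero (2 * k)] :
    #(univ.filter (Even : ZMod (2 * k) → Prop)) = k := by
  have h := card_eq_two_mul_card_filter_of_mapsTo (F := univ) (σ := (· + 1))
    (fun _ _ => mem_univ _) (add_left_injective 1) Even (ZMod.even_add_one_iff (dvd_mul_right 2 k))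
  rw [card_univ, ZMod.card] at h
  omega

theorem prod_one_add_neg_one_pow_ncard_orbit {k : ℕ} (hk : Odd k) [NeZero (2 * k)]
    (H : Subgroup (Aff (2 * k))) :
    ∏ q : orbitRel.Quotient H (ZMod (2 * k)), (1 + (-1 : ℚ) ^ q.orbit.ncard) =
      if H ≤ (AffK0 (2 * k)).subgroupOf (Aff (2 * k)) then 0
      else 2 ^ Nat.card (orbitRel.Quotient H (ZMod (2 * k))) := by
  have hn : 2 ∣ 2 * k := dvd_mul_right 2 k
  split_ifs with hH
  · have hE : ∀ g : H, g • univ.filter Even = univ.filter (Even : ZMod (2 * k) → Prop) := by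
      intro g
      ext x
      simp [← inv_smul_mem_iff, even_smul_iff_of_le_affK0 hn hH]
    obtain ⟨q, hq⟩ := exists_odd_ncard_orbit hE (by rwa [ZMod.card_filter_even])
    exact prod_eq_zero (mem_univ q) (by rw [hq.neg_one_pow, add_neg_cancel])
  · obtain ⟨g, hg⟩ := exists_even_smul_iff_not_of_not_le_affK0 hn hH
    rw [Nat.card_eq_fintype_card, ← card_univ, ← prod_const]
    refine prod_congr rfl fun q _ => ?_
    rw [(even_ncard_orbit_of_forall_iff_not g Even hg q).neg_one_pow, one_add_one_eq_two]

theorem stmt_15_general (k : ℕ) (hk : Odd k) [NeZero (2 * k)]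
    (μ : Subgroup ↥(Aff (2 * k)) → ℤ) (hμ1 : μ ⊥ = 1)
    (hrec : ∀ H : Subgroup ↥(Aff (2 * k)), H ≠ ⊥ →
      μ H = -∑ K ∈ Finset.univ.filter (fun K : Subgroup ↥(Aff (2 * k)) => K < H), μ K) :
    (Fintype.card ↥(Aff (2 * k)) : ℚ)⁻¹ *
        (∑ A : Finset (ZMod (2 * k)),
          if MulAction.stabilizer ↥(Aff (2 * k)) A = ⊥ then (-1 : ℚ) ^ A.card else 0) =
      (Fintype.card ↥(Aff (2 * k)) : ℚ)⁻¹ *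
        ∑ H ∈ Finset.univ.filter
            (fun H : Subgroup ↥(Aff (2 * k)) =>
              ¬ H ≤ (AffK0 (2 * k)).subgroupOf (Aff (2 * k))),
          (μ H : ℚ) * 2 ^ Nat.card (MulAction.orbitRel.Quotient ↥H (ZMod (2 * k))) := by
  congr 1
  calc ∑ A : Finset (ZMod (2 * k)), (if stabilizer (Aff (2 * k)) A = ⊥ then (-1 : ℚ) ^ #A else 0)
      = ∑ A : Finset (ZMod (2 * k)), ∑ H : Subgroup (Aff (2 * k)),
          if H ≤ stabilizer (Aff (2 * k)) A then (μ H : ℚ) * (-1) ^ #A else 0 := by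
        refine sum_congr rfl fun A _ => ?_
        rw [← sum_filter, ← sum_mul, ← Int.cast_sum, sum_filter_le_eq_ite_bot μ hμ1 hrec]
        split_ifs <;> simp
    _ = ∑ H : Subgroup (Aff (2 * k)),
          (μ H : ℚ) * ∏ q : orbitRel.Quotient H (ZMod (2 * k)), (1 + (-1) ^ q.orbit.ncard) := by
        rw [sum_comm]
        refine sum_congr rfl fun H _ => ?_
        rw [← sum_pow_card_smul_eq_self (G := H) (S := ZMod (2 * k)), mul_sum, sum_filter]
        refine sum_congr rfl fun A _ => ?_
        simp only [le_stabilizer_finset_iff]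
        -- the two sides differ only in the `Decidable` instance of the condition
        congr
    _ = _ := by
        rw [sum_filter]
        refine sum_congr rfl fun H _ => ?_
        rw [prod_one_add_neg_one_pow_ncard_orbit hk]
        split_ifs <;> simp

/-- For `k` odd, `Q_rig(-1) = (1/|G|) ∑_{H ≤ G, H ⊄ K₀} μ(1,H) 2^{|S/H|}` where
`G = Aff(ℤ/2kℤ)`, `μ` is the Möbius function of the subgroup lattice of `G` and `|S/H|`
is the number of `H`-orbits on `S = ℤ/2kℤ`. -/
theorem stmt_15 (k : ℕ) (hk : Odd k) (hk0 : 0 < k) [NeZero (2 * k)]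
    (μ : Subgroup ↥(Aff (2 * k)) → ℤ) (hμ1 : μ ⊥ = 1)
    (hrec : ∀ H : Subgroup ↥(Aff (2 * k)), H ≠ ⊥ →
      μ H = -∑ K ∈ Finset.univ.filter (fun K : Subgroup ↥(Aff (2 * k)) => K < H), μ K) :
    (Fintype.card ↥(Aff (2 * k)) : ℚ)⁻¹ *
        (∑ A : Finset (ZMod (2 * k)),
          if MulAction.stabilizer ↥(Aff (2 * k)) A = ⊥ then (-1 : ℚ) ^ A.card else 0) =
      (Fintype.card ↥(Aff (2 * k)) : ℚ)⁻¹ *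
        ∑ H ∈ Finset.univ.filter
            (fun H : Subgroup ↥(Aff (2 * k)) =>
              ¬ H ≤ (AffK0 (2 * k)).subgroupOf (Aff (2 * k))),
          (μ H : ℚ) * 2 ^ Nat.card (MulAction.orbitRel.Quotient ↥H (ZMod (2 * k))) :=
  stmt_15_general k hk μ hμ1 hrec
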